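/- With φ and θ as above (φ(t,ω) = sin(ω+t)/sin(ω) when sin(ω) ≠ 0, else 1; θ_s ω = ω + s), there is no map ψ : ℝ × ℝ → ℝ satisfying the perfect cocycle property ψ(t+s, ω) = ψ(t, θ_s ω)·ψ(s, ω) for ALL t, s ∈ ℝ and ALL ω ∈ ℝ, such that ψ(·, ω) = φ(·, ω) for all ω in a set Ω₁ ⊆ ℝ whose complement is Lebesgue-null. Concretely: if ψ is a perfect cocycle agreeing with φ(·, ω) for all ω ∈ Ω₁, then Ω₁ ∩ (0, π) = ∅. -/

import Mathlib

open Real Set MeasureTheory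

noncomputable def crudeCocycle (t ω : ℝ) : ℝ :=
  if sin ω ≠ 0 then sin (ω + t) / sin ω else 1

lemma crudeCocycle_zero (ω : ℝ) : crudeCocycle 0 ω = 1 := by
  unfold crudeCocycle
  split_ifs with h
  · rw [add_zero, div_self h]
  · rfl

lemma crudeCocycle_pi_sub {ω : ℝ} (hω : sin ω ≠ 0) : crudeCocycle (π - ω) ω = 0 := by
  rw [crudeCocycle, if_pos hω, add_sub_cancel, sin_pi, zero_div]

lemma cocycle_apply_ne_zero {G R : Type*} [AddGroup G] [MulZeroClass R] {ψ : G → G → R}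
    (hcocycle : ∀ t s ω, ψ (t + s) ω = ψ t (ω + s) * ψ s ω) {ω : G} (h0 : ψ 0 ω ≠ 0) (s : G) :
    ψ s ω ≠ 0 := by
  intro hs
  apply h0
  rw [← neg_add_cancel s, hcocycle, hs, mul_zero]

/-- If `sin ω ≠ 0`, then `φ(·, ω)` vanishes at `t = π - ω` but not at `t = 0`, which a perfect
cocycle cannot do. -/
lemma sin_eq_zero_of_cocycle_eq_crudeCocycle {ψ : ℝ → ℝ → ℝ}
    (hcocycle : ∀ t s ω : ℝ, ψ (t + s) ω = ψ t (ω + s) * ψ s ω) {ω : ℝ}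
    (hagree : ∀ t : ℝ, ψ t ω = crudeCocycle t ω) : sin ω = 0 := by
  by_contra hω
  have h0 : ψ 0 ω ≠ 0 := by rw [hagree, crudeCocycle_zero]; exact one_ne_zero
  exact cocycle_apply_ne_zero hcocycle h0 (π - ω) (by rw [hagree, crudeCocycle_pi_sub hω])

/-- Non-perfectibility of the crude cocycle `φ(t, ω) = sin(ω + t)/sin(ω)` (else `1`) over
`θ_s ω = ω + s`: if `ψ` satisfies the perfect cocycle property for all `t, s, ω` and agrees with
`φ(·, ω)` for every `ω ∈ Ω₁`, then `Ω₁ ∩ (0, π) = ∅`; in particular no such perfect cocycle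
exists with `Ω₁` of full Lebesgue measure. -/
theorem stmt5 (ψ : ℝ → ℝ → ℝ) (Ω₁ : Set ℝ)
    (hcocycle : ∀ t s ω : ℝ, ψ (t + s) ω = ψ t (ω + s) * ψ s ω)
    (hagree : ∀ ω ∈ Ω₁, ∀ t : ℝ,
      ψ t ω = if Real.sin ω ≠ 0 then Real.sin (ω + t) / Real.sin ω else 1) :
    Ω₁ ∩ Set.Ioo 0 Real.pi = ∅ ∧
    ¬ (MeasureTheory.volume Ω₁ᶜ = 0 ∧ ∀ ω ∈ Ω₁, ∀ t : ℝ,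
        ψ t ω = if Real.sin ω ≠ 0 then Real.sin (ω + t) / Real.sin ω else 1) := by
  have hdisjoint : Ioo 0 π ⊆ Ω₁ᶜ := fun ω ⟨h0, hπ⟩ hΩ =>
    (sin_pos_of_pos_of_lt_pi h0 hπ).ne'
      (sin_eq_zero_of_cocycle_eq_crudeCocycle hcocycle (hagree ω hΩ))
  refine ⟨eq_empty_of_forall_notMem fun ω ⟨hΩ, hω⟩ => hdisjoint hω hΩ, ?_⟩
  rintro ⟨hnull, -⟩
  exact ((Measure.measure_Ioo_pos volume).mpr pi_pos).ne' (measure_mono_null hdisjoint hnull)
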